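/- Let A be an algebra over a field, e ∈ A idempotent, and let S₁ = eAef₁ ⊆ S₂ = eAef₂ be return ideals of eAe (i.e. fᵢgᵢfᵢ = fᵢ for some gᵢ ∈ eAe). Then the globalisation functor G(M) = Ae ⊗_{eAe} M takes the inclusion S₁ ↪ S₂ to an injection G(S₁) ↪ G(S₂). -/

import Mathlib

/-!
STATEMENT 4.
`A` a unital algebra over a field `k`, `e` idempotent, and `S₁ = eAe·f₁ ⊆ S₂ = eAe·f₂`
return ideals of `eAe` (i.e. `fᵢ gᵢ fᵢ = fᵢ` for some `gᵢ ∈ eAe`).  The globalisation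
functor `G(M) = Ae ⊗_{eAe} M` (realised as a quotient of the `k`-tensor product by the
balancing relations) takes the inclusion `S₁ ↪ S₂` to an *injective* map
`G(S₁) ↪ G(S₂)`; i.e. although `G` is only right exact in general, on an inclusion of
return ideals it behaves as if left exact.  The induced map `G(ψ)` is pinned down by
`a ⊗ s ↦ a ⊗ ψ(s)` on elementary tensors.
-/

open TensorProduct

section Setup

variable (k A : Type) [Field k] [Ring A] [Algebra k A]

/-- The corner `eAe = {x | e * x * e = x}` as a `k`-submodule of `A`. -/
def cornerSub (e : A) : Submodule k A where
  carrier := {x : A | e * x * e = x}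
  add_mem' := by
    intro a b ha hb
    simp only [Set.mem_setOf_eq] at *
    rw [mul_add, add_mul, ha, hb]
  zero_mem' := by simp
  smul_mem' := by
    intro c x hx
    simp only [Set.mem_setOf_eq] at *
    rw [mul_smul_comm, smul_mul_assoc, hx]

/-- The right ideal `Ae = {x | x * e = x}` as a `k`-submodule of `A`. -/
def aeSub (e : A) : Submodule k A where
  carrier := {x : A | x * e = x}
  add_mem' := by
    intro a b ha hb
    simp only [Set.mem_setOf_eq] at *
    rw [add_mul, ha, hb]
  zero_mem' := by simp
  smul_mem' := by
    intro c x hx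
    simp only [Set.mem_setOf_eq] at *
    rw [smul_mul_assoc, hx]

/-- The balancing relations defining `Ae ⊗_{eAe} S` as a quotient of `Ae ⊗[k] S`. -/
def balRel (e : A) (S : Submodule k A) : Submodule k (aeSub k A e ⊗[k] S) :=
  Submodule.span k {t : aeSub k A e ⊗[k] S |
    ∃ (a ab : aeSub k A e) (b : cornerSub k A e) (s bs : S),
      (ab : A) = (a : A) * (b : A) ∧ (bs : A) = (b : A) * (s : A) ∧
      t = ab ⊗ₜ[k] s - a ⊗ₜ[k] bs}

/-- The globalisation `G(S) = Ae ⊗_{eAe} S`. -/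
abbrev Glob (e : A) (S : Submodule k A) : Type :=
  @HasQuotient.Quotient _ _ (Submodule.hasQuotient (R := k) (M := aeSub k A e ⊗[k] S))
    (balRel k A e S)

/-- Left multiplication by `a' ∈ A` on `Ae`. -/
noncomputable def lmulAe (e a' : A) : aeSub k A e →ₗ[k] aeSub k A e :=
  (LinearMap.mulLeft k a').restrict (p := aeSub k A e) (q := aeSub k A e) (by
    intro x hx
    have hx' : (x : A) * e = x := hx
    simp only [LinearMap.mulLeft_apply]
    show (a' * x) * e = a' * x
    rw [mul_assoc, hx'])

end Setup

/-!
The multiplication maps `μᵢ : G(Sᵢ) → A`, `[a ⊗ s] ↦ a s`, satisfy `μ₂ ∘ G(ψ) = μ₁`, so it suffices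
that `μ₁` is injective. For `S = eAe·f` with `fgf = f`, the element `u = gf ∈ S` is a right unit
of `S`, and `x ↦ [xe ⊗ u]` is a left inverse of `μ`: `[as ⊗ u] = [a ⊗ su] = [a ⊗ s]` by
balancing across `s ∈ eAe`.
-/

section Globalisation

variable {k A : Type} [Field k] [Ring A] [Algebra k A]

lemma mul_right_eq_self_of_mem_cornerSub {e x : A} (he : IsIdempotentElem e)
    (hx : x ∈ cornerSub k A e) : x * e = x := by
  have hx' : e * x * e = x := hx
  rw [← hx', mul_assoc, he.eq]

lemma mul_left_eq_self_of_mem_cornerSub {e x : A} (he : IsIdempotentElem e)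
    (hx : x ∈ cornerSub k A e) : e * x = x := by
  have hx' : e * x * e = x := hx
  rw [← hx', ← mul_assoc, ← mul_assoc, he.eq]

lemma Glob.linearMap_ext {e : A} {S : Submodule k A} {M : Type} [AddCommGroup M] [Module k M]
    {φ ψ : Glob k A e S →ₗ[k] M}
    (h : ∀ (a : aeSub k A e) (s : S),
      φ (Submodule.Quotient.mk (a ⊗ₜ[k] s)) = ψ (Submodule.Quotient.mk (a ⊗ₜ[k] s))) :
    φ = ψ :=
  Submodule.linearMap_qext _ (TensorProduct.ext' h)

noncomputable def Glob.mulMap (e : A) (S : Submodule k A) : Glob k A e S →ₗ[k] A :=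
  Submodule.liftQ _ (TensorProduct.lift
    (((LinearMap.mul k A).comp (aeSub k A e).subtype).compl₂ S.subtype))
    (by
      rw [balRel, Submodule.span_le]
      rintro t ⟨a, ab, b, s, bs, hab, hbs, rfl⟩
      simp only [SetLike.mem_coe, LinearMap.mem_ker, map_sub, TensorProduct.lift.tmul,
        LinearMap.compl₂_apply, LinearMap.comp_apply, Submodule.subtype_apply,
        LinearMap.mul_apply', hab, hbs, mul_assoc, sub_self])

@[simp]
lemma Glob.mulMap_mk (e : A) (S : Submodule k A) (a : aeSub k A e) (s : S) :
    Glob.mulMap e S (Submodule.Quotient.mk (a ⊗ₜ[k] s)) = (a : A) * (s : A) := by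
  simp [Glob.mulMap, Submodule.liftQ_apply]

noncomputable def toAe {e : A} (he : IsIdempotentElem e) : A →ₗ[k] aeSub k A e :=
  (LinearMap.mulRight k e).codRestrict (aeSub k A e) fun x => by
    show x * e * e = x * e
    rw [mul_assoc, he.eq]

noncomputable def Glob.retMap {e : A} (he : IsIdempotentElem e) {S : Submodule k A} (u : S) :
    A →ₗ[k] Glob k A e S :=
  (Submodule.mkQ _ : _ →ₗ[k] Glob k A e S) ∘ₗ (TensorProduct.mk k (aeSub k A e) S).flip u ∘ₗ
    toAe he

lemma Glob.retMap_comp_mulMap {e : A} (he : IsIdempotentElem e) {S : Submodule k A}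
    (hS : S ≤ cornerSub k A e) (u : S) (hu : ∀ s ∈ S, s * u = s) :
    Glob.retMap he u ∘ₗ Glob.mulMap e S = LinearMap.id := by
  refine Glob.linearMap_ext fun a s => ?_
  have hsc : (s : A) ∈ cornerSub k A e := hS s.2
  have has : (a : A) * s * e = a * s := by
    rw [mul_assoc, mul_right_eq_self_of_mem_cornerSub he hsc]
  have hto : toAe (k := k) he ((a : A) * s) = ⟨a * s, has⟩ := Subtype.ext has
  simp only [LinearMap.comp_apply, Glob.mulMap_mk, Glob.retMap, hto, TensorProduct.mk_apply,
    LinearMap.flip_apply, Submodule.mkQ_apply, LinearMap.id_apply, Submodule.Quotient.eq]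
  exact Submodule.subset_span ⟨a, ⟨a * s, has⟩, ⟨s, hsc⟩, u, s, rfl, (hu s s.2).symm, rfl⟩

lemma Glob.mulMap_injective_of_rightUnit {e : A} (he : IsIdempotentElem e) {S : Submodule k A}
    (hS : S ≤ cornerSub k A e) (u : S) (hu : ∀ s ∈ S, s * u = s) :
    Function.Injective (Glob.mulMap e S) :=
  Function.LeftInverse.injective (g := Glob.retMap he u) fun x =>
    LinearMap.congr_fun (Glob.retMap_comp_mulMap he hS u hu) x

lemma map_mulRight_le_cornerSub {e f : A} (he : IsIdempotentElem e) (hf : f ∈ cornerSub k A e) :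
    (cornerSub k A e).map (LinearMap.mulRight k f) ≤ cornerSub k A e := by
  rintro _ ⟨c, hc, rfl⟩
  show e * (c * f) * e = c * f
  rw [← mul_assoc, mul_left_eq_self_of_mem_cornerSub he hc, mul_assoc,
    mul_right_eq_self_of_mem_cornerSub he hf]

lemma mul_mem_map_mulRight {e f g : A} (he : IsIdempotentElem e) (hg : g ∈ cornerSub k A e)
    (hfgf : f * g * f = f) : g * f ∈ (cornerSub k A e).map (LinearMap.mulRight k f) := by
  refine ⟨g * f * g, ?_, ?_⟩
  · show e * (g * f * g) * e = g * f * g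
    rw [← mul_assoc e, ← mul_assoc e, mul_left_eq_self_of_mem_cornerSub he hg, mul_assoc _ g e,
      mul_right_eq_self_of_mem_cornerSub he hg]
  · rw [LinearMap.mulRight_apply, mul_assoc, mul_assoc, ← mul_assoc f g f, hfgf]

lemma mul_mul_eq_self_of_mem_map_mulRight {e f g : A} (hfgf : f * g * f = f) {s : A}
    (hs : s ∈ (cornerSub k A e).map (LinearMap.mulRight k f)) : s * (g * f) = s := by
  obtain ⟨c, -, rfl⟩ := hs
  rw [LinearMap.mulRight_apply, mul_assoc, ← mul_assoc f g f, hfgf]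

lemma Glob.mulMap_injective_of_returnIdeal {e f g : A} (he : IsIdempotentElem e)
    (hf : f ∈ cornerSub k A e) (hg : g ∈ cornerSub k A e) (hfgf : f * g * f = f) :
    Function.Injective (Glob.mulMap e ((cornerSub k A e).map (LinearMap.mulRight k f))) :=
  Glob.mulMap_injective_of_rightUnit he (map_mulRight_le_cornerSub he hf)
    ⟨g * f, mul_mem_map_mulRight he hg hfgf⟩
    fun _ hs => mul_mul_eq_self_of_mem_map_mulRight hfgf hs

end Globalisation

theorem stmt4_general (k A : Type) [Field k] [Ring A] [Algebra k A]
    (e f1 g1 : A) (he : IsIdempotentElem e)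
    (hf1 : f1 ∈ cornerSub k A e) (hg1 : g1 ∈ cornerSub k A e)
    (hret1 : f1 * g1 * f1 = f1)
    (S1 S2 : Submodule k A)
    (hS1 : S1 = Submodule.map (LinearMap.mulRight k f1) (cornerSub k A e))
    (hle : S1 ≤ S2)
    -- `φ = G(ψ)` is the map induced by the inclusion `ψ : S₁ ↪ S₂` :
    (φ : Glob k A e S1 →ₗ[k] Glob k A e S2)
    (hφ : ∀ (a : aeSub k A e) (s : S1),
      φ (Submodule.Quotient.mk (a ⊗ₜ[k] s))
        = Submodule.Quotient.mk (a ⊗ₜ[k] (Submodule.inclusion hle s))) :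
    Function.Injective φ := by
  have hcomm : Glob.mulMap e S2 ∘ₗ φ = Glob.mulMap e S1 :=
    Glob.linearMap_ext fun a s => by simp [hφ]
  subst hS1
  have hμ := Glob.mulMap_injective_of_returnIdeal he hf1 hg1 hret1
  rw [← hcomm, LinearMap.coe_comp] at hμ
  exact hμ.of_comp

theorem stmt4 (k A : Type) [Field k] [Ring A] [Algebra k A]
    (e f1 g1 f2 g2 : A) (he : IsIdempotentElem e)
    (hf1 : f1 ∈ cornerSub k A e) (hg1 : g1 ∈ cornerSub k A e)
    (hf2 : f2 ∈ cornerSub k A e) (hg2 : g2 ∈ cornerSub k A e)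
    (hret1 : f1 * g1 * f1 = f1) (hret2 : f2 * g2 * f2 = f2)
    (S1 S2 : Submodule k A)
    (hS1 : S1 = Submodule.map (LinearMap.mulRight k f1) (cornerSub k A e))
    (hS2 : S2 = Submodule.map (LinearMap.mulRight k f2) (cornerSub k A e))
    (hle : S1 ≤ S2)
    -- `φ = G(ψ)` is the map induced by the inclusion `ψ : S₁ ↪ S₂` :
    (φ : Glob k A e S1 →ₗ[k] Glob k A e S2)
    (hφ : ∀ (a : aeSub k A e) (s : S1),
      φ (Submodule.Quotient.mk (a ⊗ₜ[k] s))
        = Submodule.Quotient.mk (a ⊗ₜ[k] (Submodule.inclusion hle s))) :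
    Function.Injective φ :=
  stmt4_general k A e f1 g1 he hf1 hg1 hret1 S1 S2 hS1 hle φ hφ
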